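/- If f and g are polynomials that are each nonnegative on ℝⁿ (positive semidefinite polynomials), then the Newton polytope of f is contained in the Newton polytope of f + g: C(f) ⊆ C(f+g). -/

import Mathlib

/-! If an exponent `α` of `f` were a vertex of `conv (supp f ∪ supp (f + g))` but not an exponent
of `f + g`, some weight `w` would single `α` out as the unique `w`-maximal exponent of both `f`
and `g`. Substituting `xᵢ = t ^ wᵢ` and letting `t → ∞` shows that such a leading coefficient of a
nonnegative polynomial is positive, contradicting `coeff α f + coeff α g = 0`. So every vertex of
that hull is an exponent of `f + g`, and Krein–Milman gives `C(f) ⊆ C(f + g)`. -/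

noncomputable def newtonPolytope {n : ℕ} (p : MvPolynomial (Fin n) ℝ) : Set (Fin n → ℝ) :=
  convexHull ℝ ((fun (α : (Fin n) →₀ ℕ) (i : Fin n) => (α i : ℝ)) '' ↑p.support)

open Filter Topology

section ExtremePoints

variable {E : Type*} [AddCommGroup E] [Module ℝ E] [TopologicalSpace E] [T2Space E]
  [IsTopologicalAddGroup E] [ContinuousSMul ℝ E] [LocallyConvexSpace ℝ E] {M T : Set E}

theorem Set.Finite.exists_forall_lt_of_mem_extremePoints_convexHull (hM : M.Finite) {a : E}
    (ha : a ∈ (convexHull ℝ M).extremePoints ℝ) :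
    ∃ ℓ : StrongDual ℝ E, ∀ b ∈ M, b ≠ a → ℓ b < ℓ a := by
  have ha' : a ∉ convexHull ℝ (M \ {a}) := fun h =>
    ((convex_convexHull ℝ M).mem_extremePoints_iff_mem_sdiff_convexHull_sdiff.1 ha).2
      (convexHull_mono (Set.sdiff_subset_sdiff_left (subset_convexHull ℝ M)) h)
  obtain ⟨ℓ, u, hau, hu⟩ :=
    geometric_hahn_banach_point_closed (convex_convexHull ℝ _)
      (hM.sdiff.isClosed_convexHull (𝕜 := ℝ)) ha'
  refine ⟨-ℓ, fun b hb hba => ?_⟩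
  simpa using hau.trans (hu b (subset_convexHull ℝ _ ⟨hb, hba⟩))

theorem Set.Finite.convexHull_subset_of_extremePoints_subset (hM : M.Finite) (hT : T.Finite)
    (h : (convexHull ℝ M).extremePoints ℝ ⊆ T) : convexHull ℝ M ⊆ convexHull ℝ T := by
  rw [← closure_convexHull_extremePoints (hM.isCompact_convexHull (𝕜 := ℝ))
    (convex_convexHull ℝ M)]
  exact closure_minimal (convexHull_mono h) (hT.isClosed_convexHull (𝕜 := ℝ))

end ExtremePoints

namespace MvPolynomial

variable {σ : Type*}

def exponentVector (α : σ →₀ ℕ) : σ → ℝ := fun i => α i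

theorem exponentVector_injective : Function.Injective (exponentVector (σ := σ)) :=
  fun _ _ h => Finsupp.ext fun i => Nat.cast_injective (congrFun h i)

variable [Fintype σ]

theorem prod_rpow_pow_eq_rpow_dotProduct (w : σ → ℝ) {t : ℝ} (ht : 0 < t) (β : σ →₀ ℕ) :
    ∏ i, (t ^ w i) ^ β i = t ^ (w ⬝ᵥ exponentVector β) := by
  rw [dotProduct, Real.rpow_sum_of_pos ht]
  refine Finset.prod_congr rfl fun i _ => ?_
  rw [← Real.rpow_natCast, ← Real.rpow_mul ht.le, exponentVector]

variable {p : MvPolynomial σ ℝ} {α : σ →₀ ℕ}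

theorem coeff_pos_of_nonneg_of_forall_lt (hp : ∀ x, 0 ≤ eval x p) (w : σ → ℝ)
    (hα : α ∈ p.support)
    (hmax : ∀ β ∈ p.support, β ≠ α → w ⬝ᵥ exponentVector β < w ⬝ᵥ exponentVector α) :
    0 < coeff α p := by
  set L : (σ →₀ ℕ) → ℝ := fun β => w ⬝ᵥ exponentVector β
  -- `t ^ (-L α) * p (t ^ w)` is nonnegative and tends to `coeff α p`, all other terms decaying.
  have h_eval : ∀ t > 0, t ^ (-L α) * eval (fun i => t ^ w i) p
      = ∑ β ∈ p.support, coeff β p * t ^ (L β - L α) := by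
    intro t ht
    rw [eval_eq', Finset.mul_sum]
    refine Finset.sum_congr rfl fun β _ => ?_
    rw [prod_rpow_pow_eq_rpow_dotProduct w ht, sub_eq_neg_add, Real.rpow_add ht]
    ring
  have h_lim : Tendsto (fun t : ℝ => ∑ β ∈ p.support, coeff β p * t ^ (L β - L α)) atTop
      (𝓝 (∑ β ∈ p.support, if β = α then coeff α p else 0)) := by
    refine tendsto_finsetSum _ fun β hβ => ?_
    split_ifs with h
    · subst h
      simp
    · simpa using (tendsto_rpow_neg_atTop (sub_pos.2 (hmax β hβ h))).const_mul (coeff β p)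
  rw [Finset.sum_ite_eq' p.support α, if_pos hα] at h_lim
  have h_nonneg : 0 ≤ coeff α p := ge_of_tendsto h_lim <| (eventually_gt_atTop 0).mono
    fun t ht => h_eval t ht ▸ mul_nonneg (Real.rpow_nonneg ht.le _) (hp _)
  exact h_nonneg.lt_of_ne' (mem_support_iff.1 hα)

theorem coeff_pos_of_nonneg_of_mem_extremePoints (hp : ∀ x, 0 ≤ eval x p) {M : Set (σ → ℝ)}
    (hM : M.Finite) (hpM : exponentVector '' p.support ⊆ M) (hα : α ∈ p.support)
    (hext : exponentVector α ∈ (convexHull ℝ M).extremePoints ℝ) : 0 < coeff α p := by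
  classical
  obtain ⟨ℓ, hℓ⟩ := hM.exists_forall_lt_of_mem_extremePoints_convexHull hext
  obtain ⟨w, hw⟩ := (dotProductEquiv ℝ σ).surjective ℓ.toLinearMap
  refine coeff_pos_of_nonneg_of_forall_lt hp w hα fun β hβ hne => ?_
  have hℓw : ∀ x, ℓ x = w ⬝ᵥ x := fun x => by rw [← ContinuousLinearMap.coe_coe, ← hw]; rfl
  simpa only [hℓw] using hℓ _ (hpM ⟨β, hβ, rfl⟩) (exponentVector_injective.ne hne)

end MvPolynomial

open MvPolynomial in
theorem newton_polytope_add_subset (n : ℕ) (f g : MvPolynomial (Fin n) ℝ)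
    (hf : ∀ x : Fin n → ℝ, 0 ≤ MvPolynomial.eval x f)
    (hg : ∀ x : Fin n → ℝ, 0 ≤ MvPolynomial.eval x g) :
    newtonPolytope f ⊆ newtonPolytope (f + g) := by
  classical
  set S := exponentVector '' (f.support : Set (Fin n →₀ ℕ))
  set T := exponentVector '' ((f + g).support : Set (Fin n →₀ ℕ))
  have hT : T.Finite := (f + g).support.finite_toSet.image _
  have hM : (S ∪ T).Finite := (f.support.finite_toSet.image _).union hT
  have hgM : exponentVector '' g.support ⊆ S ∪ T := by
    rintro _ ⟨β, hβ, rfl⟩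
    have hβ' : β ∈ (f + g - f).support := by simpa using hβ
    rcases Finset.mem_union.1 (support_sub _ _ _ hβ') with h | h
    exacts [Or.inr ⟨β, h, rfl⟩, Or.inl ⟨β, h, rfl⟩]
  have hext : (convexHull ℝ (S ∪ T)).extremePoints ℝ ⊆ T := by
    intro a ha
    obtain ⟨α, hαf, rfl⟩ | haT := extremePoints_convexHull_subset ha
    · by_contra hαT
      have hfg : coeff α (f + g) = 0 := notMem_support_iff.1 fun h => hαT ⟨α, h, rfl⟩
      have hf_pos := coeff_pos_of_nonneg_of_mem_extremePoints hf hM Set.subset_union_left hαf ha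
      have hαg : α ∈ g.support := mem_support_iff.2 fun h => hf_pos.ne' (by simpa [h] using hfg)
      have hg_pos := coeff_pos_of_nonneg_of_mem_extremePoints hg hM hgM hαg ha
      rw [coeff_add] at hfg
      linarith
    · exact haT
  exact (convexHull_mono Set.subset_union_left).trans
    (hM.convexHull_subset_of_extremePoints_subset hT hext)
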